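/- Let K = C + cone(R) where C ⊆ ℝ^n is compact convex and R is a finite set of vectors (so K is Motzkin-decomposable with polyhedral recession cone), and let F = {x ∈ K : π·x = σ_K(π)} be a nonempty face of K given by the supporting hyperplane π·x = σ_K(π) with σ_K(π) < ∞. For δ > 0 let F_δ := {x ∈ K : ∃ x' ∈ F, ‖x − x'‖ ≤ δ}. Then there exists ε > 0 such that for all π' with ‖π' − π‖ < ε, σ_K(π') = σ_{F_δ}(π'). -/

import Mathlib

/-!
A ray `r ∈ R` with `π·r > 0` would make `σ_K(π)` infinite, so `π·r ≤ 0` on `R` and the maximum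
of `π` over `K` is attained on the compact set `C`, at some `b`; thus `F = {x ∈ K : π·x = π·b}`.
The points of `C` at distance `≥ δ` from `F` form a compact set on which `π < π·b`, and by
compactness this strict inequality survives for all `π'` near `π`. For such `π'`, either some
ray has `π'·r > 0`; then `π·r = 0`, because rays with `π·r < 0` keep `π'·r < 0`, so the ray
recedes inside `F` and both support values are `+∞`. Or `π'` is nonpositive on `R`, its maximum
over `K` is attained on `C`, and by the above at a point within `δ` of `F`.
-/

open Pointwise
open scoped RealInnerProductSpace

/-- The conical hull of a set: all finite nonnegative combinations. -/
def conicalHull {E : Type*} [AddCommMonoid E] [Module ℝ E] (s : Set E) : Set E :=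
  {x | ∃ (k : ℕ) (c : Fin k → ℝ) (v : Fin k → E),
    (∀ i, 0 ≤ c i) ∧ (∀ i, v i ∈ s) ∧ x = ∑ i, c i • v i}

/-- The support function of a set, with values in `EReal`. -/
noncomputable def suppFn {n : ℕ} (c : EuclideanSpace ℝ (Fin n))
    (S : Set (EuclideanSpace ℝ (Fin n))) : EReal :=
  sSup ((fun x => ((⟪c, x⟫ : ℝ) : EReal)) '' S)

open Filter Topology Metric

section ConicalHull

variable {E : Type*} [AddCommMonoid E] [Module ℝ E] {s : Set E}

lemma zero_mem_conicalHull : (0 : E) ∈ conicalHull s :=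
  ⟨0, Fin.elim0, Fin.elim0, Fin.rec0, Fin.rec0, by simp⟩

lemma add_smul_mem_conicalHull {x r : E} {t : ℝ} (hx : x ∈ conicalHull s) (hr : r ∈ s)
    (ht : 0 ≤ t) : x + t • r ∈ conicalHull s := by
  obtain ⟨k, c, v, hc, hv, rfl⟩ := hx
  exact ⟨k + 1, Fin.snoc c t, Fin.snoc v r,
    Fin.lastCases (by simpa using ht) (by simpa using hc),
    Fin.lastCases (by simpa using hr) (by simpa using hv), by simp [Fin.sum_univ_castSucc]⟩

lemma subset_add_conicalHull (C : Set E) : C ⊆ C + conicalHull s :=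
  fun c hc => ⟨c, hc, 0, zero_mem_conicalHull, add_zero c⟩

lemma add_smul_mem_add_conicalHull {C : Set E} {x r : E} {t : ℝ}
    (hx : x ∈ C + conicalHull s) (hr : r ∈ s) (ht : 0 ≤ t) :
    x + t • r ∈ C + conicalHull s := by
  obtain ⟨c, hc, d, hd, rfl⟩ := hx
  exact ⟨c, hc, d + t • r, add_smul_mem_conicalHull hd hr ht, (add_assoc c d _).symm⟩

end ConicalHull

section InnerProductSpace

variable {E : Type*} [NormedAddCommGroup E] [InnerProductSpace ℝ E]

lemma inner_nonpos_of_mem_conicalHull {s : Set E} {p d : E} (hs : ∀ r ∈ s, ⟪p, r⟫ ≤ 0)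
    (hd : d ∈ conicalHull s) : ⟪p, d⟫ ≤ 0 := by
  obtain ⟨k, c, v, hc, hv, rfl⟩ := hd
  rw [inner_sum]
  exact Finset.sum_nonpos fun i _ => by
    rw [real_inner_smul_right]
    exact mul_nonpos_of_nonneg_of_nonpos (hc i) (hs _ (hv i))

lemma exists_isMaxOn_inner_add_conicalHull {C s : Set E} {p : E} (hC : IsCompact C)
    (hCne : C.Nonempty) (hs : ∀ r ∈ s, ⟪p, r⟫ ≤ 0) :
    ∃ b ∈ C, IsMaxOn (fun x => ⟪p, x⟫) (C + conicalHull s) b := by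
  obtain ⟨b, hbC, hb⟩ :=
    hC.exists_isMaxOn hCne (by fun_prop : Continuous fun x => ⟪p, x⟫).continuousOn
  refine ⟨b, hbC, isMaxOn_iff.2 ?_⟩
  rintro _ ⟨c, hc, d, hd, rfl⟩
  have hpd := inner_nonpos_of_mem_conicalHull hs hd
  have hpc := isMaxOn_iff.1 hb c hc
  rw [inner_add_right]
  linarith

lemma eventually_inner_neg_of_inner_neg (R : Finset E) (p : E) :
    ∀ᶠ q in 𝓝 p, ∀ r ∈ R, ⟪p, r⟫ < 0 → ⟪q, r⟫ < 0 :=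
  (eventually_all_finset R).2 fun r _ => eventually_imp_distrib_left.2 fun h =>
    (by fun_prop : Continuous fun q => ⟪q, r⟫).continuousAt.eventually_lt continuousAt_const h

lemma IsCompact.eventually_forall_inner_lt {A : Set E} (hA : IsCompact A) {p c : E}
    (h : ∀ x ∈ A, ⟪p, x⟫ < ⟪p, c⟫) : ∀ᶠ q in 𝓝 p, ∀ x ∈ A, ⟪q, x⟫ < ⟪q, c⟫ :=
  hA.eventually_forall_of_forall_eventually fun x hx =>
    ContinuousAt.eventually_lt (f := fun z : E × E => ⟪z.1, z.2⟫)
      (g := fun z : E × E => ⟪z.1, c⟫) (by fun_prop) (by fun_prop) (h x hx)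

end InnerProductSpace

section SupportFunction

variable {n : ℕ} {p b x r : EuclideanSpace ℝ (Fin n)} {S T : Set (EuclideanSpace ℝ (Fin n))}

lemma suppFn_mono (p : EuclideanSpace ℝ (Fin n)) (h : S ⊆ T) : suppFn p S ≤ suppFn p T :=
  sSup_le_sSup (Set.image_mono h)

lemma le_suppFn (p : EuclideanSpace ℝ (Fin n)) (hx : x ∈ S) :
    ((⟪p, x⟫ : ℝ) : EReal) ≤ suppFn p S :=
  le_sSup (Set.mem_image_of_mem _ hx)

lemma suppFn_eq_of_isMaxOn (hb : b ∈ S) (hmax : IsMaxOn (fun x => ⟪p, x⟫) S b) :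
    suppFn p S = ⟪p, b⟫ :=
  le_antisymm (sSup_le (Set.forall_mem_image.2 fun _ hx => EReal.coe_le_coe_iff.2 (hmax hx)))
    (le_suppFn p hb)

lemma suppFn_eq_of_isMaxOn_of_subset (hST : S ⊆ T) (hb : b ∈ S)
    (hmax : IsMaxOn (fun x => ⟪p, x⟫) T b) : suppFn p S = suppFn p T := by
  rw [suppFn_eq_of_isMaxOn hb (hmax.on_subset hST), suppFn_eq_of_isMaxOn (hST hb) hmax]

lemma suppFn_eq_top_of_ray (hr : 0 < ⟪p, r⟫) (hS : ∀ t : ℝ, 0 ≤ t → x + t • r ∈ S) :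
    suppFn p S = ⊤ := by
  refine (EReal.eq_top_iff_forall_lt _).2 fun y => ?_
  set t := (|y - ⟪p, x⟫| + 1) / ⟪p, r⟫
  have hgain : t * ⟪p, r⟫ = |y - ⟪p, x⟫| + 1 := div_mul_cancel₀ _ hr.ne'
  refine lt_of_lt_of_le (EReal.coe_lt_coe_iff.2 ?_) (le_suppFn p (hS t (by positivity)))
  rw [inner_add_right, real_inner_smul_right, hgain]
  linarith [le_abs_self (y - ⟪p, x⟫)]

lemma inner_nonpos_of_suppFn_add_conicalHull_ne_top {C s : Set (EuclideanSpace ℝ (Fin n))}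
    (hCne : C.Nonempty) (hfin : suppFn p (C + conicalHull s) ≠ ⊤) (hr : r ∈ s) :
    ⟪p, r⟫ ≤ 0 := by
  by_contra! hpos
  obtain ⟨c, hc⟩ := hCne
  exact hfin (suppFn_eq_top_of_ray hpos fun t ht =>
    add_smul_mem_add_conicalHull (subset_add_conicalHull C hc) hr ht)

theorem eventually_suppFn_inter_thickening_face_eq {C : Set (EuclideanSpace ℝ (Fin n))}
    {R : Finset (EuclideanSpace ℝ (Fin n))} {δ : ℝ} (hC : IsCompact C)
    (hR : ∀ r ∈ R, ⟪p, r⟫ ≤ 0) (hbC : b ∈ C)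
    (hb : IsMaxOn (fun x => ⟪p, x⟫) (C + conicalHull (R : Set _)) b) (hδ : 0 < δ) :
    ∀ᶠ q in 𝓝 p, suppFn q ((C + conicalHull (R : Set _)) ∩
        thickening δ {x ∈ C + conicalHull (R : Set _) | ⟪p, x⟫ = ⟪p, b⟫}) =
      suppFn q (C + conicalHull (R : Set _)) := by
  set K := C + conicalHull (R : Set (EuclideanSpace ℝ (Fin n)))
  set F := {x ∈ K | ⟪p, x⟫ = ⟪p, b⟫}
  have hCK : C ⊆ K := subset_add_conicalHull C
  have hFT : F ⊆ K ∩ thickening δ F := fun x hx => ⟨hx.1, self_subset_thickening hδ F hx⟩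
  have hfar : ∀ x ∈ C \ thickening δ F, ⟪p, x⟫ < ⟪p, b⟫ := fun x ⟨hxC, hxF⟩ =>
    (isMaxOn_iff.1 hb x (hCK hxC)).lt_of_ne fun h =>
      hxF (self_subset_thickening hδ F ⟨hCK hxC, h⟩)
  filter_upwards [eventually_inner_neg_of_inner_neg R p,
    (hC.diff isOpen_thickening).eventually_forall_inner_lt hfar] with q hneg hlt
  by_cases hpos : ∃ r ∈ R, 0 < ⟪q, r⟫
  · obtain ⟨r, hrR, hr⟩ := hpos
    have hr0 : ⟪p, r⟫ = 0 := (hR r hrR).eq_of_not_lt fun h => (hneg r hrR h).not_gt hr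
    have hray : ∀ t : ℝ, 0 ≤ t → b + t • r ∈ F := fun t ht =>
      ⟨add_smul_mem_add_conicalHull (hCK hbC) (Finset.mem_coe.2 hrR) ht,
        by rw [inner_add_right, real_inner_smul_right, hr0, mul_zero, add_zero]⟩
    rw [suppFn_eq_top_of_ray hr fun t ht => hFT (hray t ht),
      suppFn_eq_top_of_ray hr fun t ht => (hray t ht).1]
  · push Not at hpos
    obtain ⟨b', hb'C, hb'⟩ := exists_isMaxOn_inner_add_conicalHull hC ⟨b, hbC⟩ hpos
    have hb'F : b' ∈ thickening δ F := by
      by_contra h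
      exact (hlt b' ⟨hb'C, h⟩).not_ge (isMaxOn_iff.1 hb' b (hCK hbC))
    exact suppFn_eq_of_isMaxOn_of_subset Set.inter_subset_left ⟨hCK hb'C, hb'F⟩ hb'

end SupportFunction

theorem motzkin_sticky_neighborhood_general (n : ℕ)
    (C K : Set (EuclideanSpace ℝ (Fin n)))
    (hCcompact : IsCompact C) (hCne : C.Nonempty)
    (R : Finset (EuclideanSpace ℝ (Fin n)))
    (hK : K = C + conicalHull (R : Set (EuclideanSpace ℝ (Fin n))))
    (π : EuclideanSpace ℝ (Fin n))
    (hfin : suppFn π K ≠ ⊤)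
    (F : Set (EuclideanSpace ℝ (Fin n)))
    (hF : F = {x ∈ K | ((⟪π, x⟫ : ℝ) : EReal) = suppFn π K})
    (δ : ℝ) (hδ : 0 < δ) :
    ∃ ε > (0 : ℝ), ∀ π' : EuclideanSpace ℝ (Fin n), ‖π' - π‖ < ε →
      suppFn π' K = suppFn π' {x ∈ K | ∃ x' ∈ F, ‖x - x'‖ ≤ δ} := by
  subst hK hF
  have hR : ∀ r ∈ R, ⟪π, r⟫ ≤ 0 := fun r hr =>
    inner_nonpos_of_suppFn_add_conicalHull_ne_top hCne hfin (Finset.mem_coe.2 hr)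
  obtain ⟨b, hbC, hb⟩ := exists_isMaxOn_inner_add_conicalHull hCcompact hCne hR
  rw [suppFn_eq_of_isMaxOn (subset_add_conicalHull C hbC) hb]
  simp_rw [EReal.coe_eq_coe_iff]
  obtain ⟨ε, hε, hball⟩ := Metric.eventually_nhds_iff.1
    (eventually_suppFn_inter_thickening_face_eq hCcompact hR hbC hb hδ)
  refine ⟨ε, hε, fun π' hπ' => le_antisymm ?_ (suppFn_mono π' fun x hx => hx.1)⟩
  rw [← hball (by rwa [dist_eq_norm])]
  refine suppFn_mono π' fun x ⟨hxK, hx⟩ => ⟨hxK, ?_⟩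
  obtain ⟨y, hy, hxy⟩ := mem_thickening_iff.1 hx
  exact ⟨y, hy, (dist_eq_norm x y ▸ hxy).le⟩

/-- Sticky-face-type lemma for a Motzkin-decomposable set `K = C + cone(R)`
with polyhedral recession cone: if `F` is the nonempty `π`-face of `K` with
`σ_K(π) < ∞`, then for every `δ > 0` there is `ε > 0` such that for all `π'`
with `‖π' - π‖ < ε` one has `σ_K(π') = σ_{F_δ}(π')`, where
`F_δ = {x ∈ K : ∃ x' ∈ F, ‖x - x'‖ ≤ δ}`. -/
theorem motzkin_sticky_neighborhood (n : ℕ)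
    (C K : Set (EuclideanSpace ℝ (Fin n)))
    (hCcompact : IsCompact C) (hCconv : Convex ℝ C) (hCne : C.Nonempty)
    (R : Finset (EuclideanSpace ℝ (Fin n)))
    (hK : K = C + conicalHull (R : Set (EuclideanSpace ℝ (Fin n))))
    (π : EuclideanSpace ℝ (Fin n))
    (hfin : suppFn π K ≠ ⊤)
    (F : Set (EuclideanSpace ℝ (Fin n)))
    (hF : F = {x ∈ K | ((⟪π, x⟫ : ℝ) : EReal) = suppFn π K})
    (hFne : F.Nonempty)
    (δ : ℝ) (hδ : 0 < δ) :
    ∃ ε > (0 : ℝ), ∀ π' : EuclideanSpace ℝ (Fin n), ‖π' - π‖ < ε →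
      suppFn π' K = suppFn π' {x ∈ K | ∃ x' ∈ F, ‖x - x'‖ ≤ δ} :=
  motzkin_sticky_neighborhood_general n C K hCcompact hCne R hK π hfin F hF δ hδ
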